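/- arXiv:math/0306311 — 4 statements merged into one kernel-verified Lean document; each statement's English description precedes it below -/
import Mathlib

section
/- Let 0 → a → d → t → 0 be an exact sequence of finite-dimensional real vector spaces, where d has basis ω₁,…,ωₙ, let αᵢ ∈ a* be the restriction to a of the dual basis vector ωⁱ (i.e. the image of ωⁱ under the dual projection d* → a*), and let βᵢ = π(ωᵢ) ∈ t. Then a linear combination ∑ᵢ mᵢαᵢ vanishes in a* if and only if there exists a linear functional l ∈ t* such that l(βᵢ) = mᵢ for all i. -/
/-- **Gale duality, fundamental relation.**
Let `0 → A → D → T → 0` be an exact sequence of finite-dimensional real vector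
spaces, where `D` has basis `ω₁,…,ωₙ`; let `αᵢ ∈ A*` be the restriction to `A`
(i.e. composition with `ι`) of the dual basis vector `ωⁱ`, and `βᵢ = π(ωᵢ) ∈ T`.
Then `∑ mᵢ • αᵢ = 0` in `A*` iff there is `l ∈ T*` with `l(βᵢ) = mᵢ` for all `i`. -/
theorem stmt0
    {A D T : Type*} [AddCommGroup A] [Module ℝ A]
    [AddCommGroup D] [Module ℝ D] [AddCommGroup T] [Module ℝ T]
    [FiniteDimensional ℝ A] [FiniteDimensional ℝ D] [FiniteDimensional ℝ T]
    {n : ℕ} (ω : Module.Basis (Fin n) ℝ D)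
    (ι : A →ₗ[ℝ] D) (π : D →ₗ[ℝ] T)
    (hι : Function.Injective ι) (hπ : Function.Surjective π)
    (hex : LinearMap.range ι = LinearMap.ker π)
    (m : Fin n → ℝ) :
    (∑ i, m i • ((ω.coord i).comp ι)) = 0 ↔
      ∃ l : Module.Dual ℝ T, ∀ i, l (π (ω i)) = m i := by
  set f : Module.Dual ℝ D := ∑ i, m i • ω.coord i with hf
  have hfω : ∀ i, f (ω i) = m i := by
    intro i
    simp [hf, LinearMap.sum_apply, Module.Basis.coord_apply, Finset.sum_eq_single i,
      Finset.mem_univ, ω.repr_self, Finsupp.single_apply]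
  constructor
  · intro h
    have hker : LinearMap.ker π ≤ LinearMap.ker f := by
      rw [← hex]
      rintro _ ⟨a, rfl⟩
      have := LinearMap.congr_fun h a
      simpa [hf, LinearMap.sum_apply] using this
    set e := LinearMap.quotKerEquivOfSurjective π hπ
    refine ⟨((LinearMap.ker π).liftQ f hker).comp (e.symm : T →ₗ[ℝ] _), ?_⟩
    intro i
    have : e.symm (π (ω i)) = Submodule.Quotient.mk (ω i) := by
      apply e.injective
      simp [e, LinearMap.quotKerEquivOfSurjective, LinearMap.quotKerEquivRange_apply_mk]
    simp [this, hfω]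
  · rintro ⟨l, hl⟩
    have hcomp : l.comp π = f := by
      rw [hf, ← ω.sum_dual_apply_smul_coord (l.comp π)]
      simp [hl]
    ext a
    have : π (ι a) = 0 := by
      rw [← LinearMap.mem_ker, ← hex]; exact ⟨a, rfl⟩
    have h2 : f (ι a) = 0 := by
      rw [← hcomp]; simp [this]
    simpa [hf, LinearMap.sum_apply] using h2
end

section
/- Let the exact sequence 0 → a → d →^π t → 0 restrict to an exact sequence of full-rank lattices Γ_a ⊂ a, Γ_d = ⊕ᵢ ℤωᵢ ⊂ d, Γ_t ⊂ t. For σ ⊆ {1,…,n} with {αᵢ : i ∈ σ} a basis of a*, the absolute value of the volume of the parallelepiped spanned by {αᵢ : i ∈ σ}, measured against the lattice Γ*_a, equals the absolute value of the volume of the parallelepiped spanned by {βᵢ : i ∈ σ̄}, measured against the lattice Γ_t, where σ̄ is the complementary index set. -/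
private lemma exists_right_inverse_of_surjective {m n : Type*} [Fintype m] [Fintype n]
    [DecidableEq m] (M : Matrix m n ℤ) (h : Function.Surjective M.mulVec) :
    ∃ V : Matrix n m ℤ, M * V = 1 := by
  choose s hs using h
  refine ⟨Matrix.of (fun j k => s (Pi.single k 1) j), ?_⟩
  ext i k
  have := congrFun (hs (Pi.single k 1)) i
  simpa [Matrix.mul_apply, Matrix.mulVec, dotProduct, Matrix.one_apply,
    Pi.single_apply] using this

/-- **Gale duality: equality of lattice volumes.**
Lattice–level formulation: the exact sequence `0 → Γ_a → Γ_d → Γ_t → 0` of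
lattices (with `Γ_d = ℤ^(r+d)` in the basis `ω`) is encoded by integer matrices
`P` (the inclusion `Γ_a = ℤ^r → ℤ^(r+d)`; its `i`-th row is the coordinate
vector of `αᵢ` in a lattice basis of `Γ*_a`) and `Q` (the projection
`ℤ^(r+d) → Γ_t = ℤ^d`; its `i`-th column is the coordinate vector of `βᵢ` in a
lattice basis of `Γ_t`), exactness being expressed by `hP, hQ, hQP, hker`.
For `σ` of cardinality `r` with `{αᵢ : i ∈ σ}` a basis (nonzero determinant),
the absolute value of the volume of the parallelepiped spanned by
`{αᵢ : i ∈ σ}` equals that of the parallelepiped spanned by `{βᵢ : i ∈ σ̄}`. -/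
theorem stmt2 {r d : ℕ}
    (P : Matrix (Fin (r + d)) (Fin r) ℤ) (Q : Matrix (Fin d) (Fin (r + d)) ℤ)
    (hP : Function.Injective P.mulVec)
    (hQ : Function.Surjective Q.mulVec)
    (hQP : Q * P = 0)
    (hker : ∀ v : Fin (r + d) → ℤ, Q.mulVec v = 0 → ∃ x : Fin r → ℤ, P.mulVec x = v)
    (σ : Finset (Fin (r + d))) (h1 : σ.card = r) (h2 : σᶜ.card = d)
    (hbasis : (P.submatrix (fun k => (σ.orderIsoOfFin h1 k : Fin (r + d))) id).det ≠ 0) :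
    (P.submatrix (fun k => (σ.orderIsoOfFin h1 k : Fin (r + d))) id).det.natAbs
      = (Q.submatrix id (fun k => (σᶜ.orderIsoOfFin h2 k : Fin (r + d)))).det.natAbs := by
  -- the splitting S with Q * S = 1
  obtain ⟨S, hS⟩ := exists_right_inverse_of_surjective Q hQ
  -- the index bijection Fin r ⊕ Fin d ≃ Fin (r + d) given by σ and σᶜ
  set f : Fin r ⊕ Fin d → Fin (r + d) :=
    Sum.elim (fun k => (σ.orderIsoOfFin h1 k : Fin (r + d)))
      (fun k => (σᶜ.orderIsoOfFin h2 k : Fin (r + d))) with hf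
  have hmemσ : ∀ k, f (Sum.inl k) ∈ σ := fun k => (σ.orderIsoOfFin h1 k).2
  have hmemτ : ∀ k, f (Sum.inr k) ∈ σᶜ := fun k => (σᶜ.orderIsoOfFin h2 k).2
  have hinj : Function.Injective f := by
    rintro (a | a) (b | b) hab
    · have : σ.orderIsoOfFin h1 a = σ.orderIsoOfFin h1 b := Subtype.ext hab
      simpa using (σ.orderIsoOfFin h1).injective this
    · exact absurd ((Finset.mem_compl.mp (hmemτ b)) (hab ▸ hmemσ a)) not_false
    · exact absurd ((Finset.mem_compl.mp (hmemτ a)) (hab ▸ hmemσ b)) not_false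
    · have : σᶜ.orderIsoOfFin h2 a = σᶜ.orderIsoOfFin h2 b := Subtype.ext hab
      simpa using (σᶜ.orderIsoOfFin h2).injective this
  have hbij : Function.Bijective f := by
    rw [Fintype.bijective_iff_injective_and_card]
    exact ⟨hinj, by simp⟩
  set e : (Fin r ⊕ Fin d) ≃ Fin (r + d) := Equiv.ofBijective f hbij with he
  have he_apply : ∀ x, e x = f x := fun x => rfl
  -- the matrices U = [P | S] and W = [E ; Q]
  set U : Matrix (Fin (r + d)) (Fin r ⊕ Fin d) ℤ := Matrix.fromCols P S with hU
  set E : Matrix (Fin r) (Fin (r + d)) ℤ :=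
    Matrix.of (fun k j => if j = f (Sum.inl k) then (1 : ℤ) else 0) with hE
  set W : Matrix (Fin r ⊕ Fin d) (Fin (r + d)) ℤ := Matrix.fromRows E Q with hW
  -- U is surjective hence its reindexing has unit determinant
  have hUsurj : Function.Surjective U.mulVec := by
    intro v
    have hker' : Q.mulVec (v - S.mulVec (Q.mulVec v)) = 0 := by
      have : Q.mulVec (S.mulVec (Q.mulVec v)) = Q.mulVec v := by
        rw [Matrix.mulVec_mulVec, hS, Matrix.one_mulVec]
      rw [Matrix.mulVec_sub, this, sub_self]
    obtain ⟨x, hx⟩ := hker _ hker'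
    refine ⟨Sum.elim x (Q.mulVec v), ?_⟩
    rw [hU, Matrix.fromCols_mulVec_sumElim, hx]
    abel
  have hU'surj : Function.Surjective (U.submatrix e id).mulVec := by
    intro w
    obtain ⟨v, hv⟩ := hUsurj (w ∘ e.symm)
    refine ⟨v, ?_⟩
    ext i
    have : (U.submatrix e id).mulVec v i = U.mulVec v (e i) := by
      simp [Matrix.mulVec, Matrix.submatrix, dotProduct]
    rw [this, hv]
    simp
  obtain ⟨V, hV⟩ := exists_right_inverse_of_surjective _ hU'surj
  have hdetU : (U.submatrix e id).det.natAbs = 1 := by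
    have : (U.submatrix e id).det * V.det = 1 := by
      rw [← Matrix.det_mul, hV, Matrix.det_one]
    rcases Int.isUnit_iff.mp (IsUnit.of_mul_eq_one _ this) with h | h <;> simp [h]
  -- compute W * U
  have hEP : E * P = P.submatrix (fun k => (σ.orderIsoOfFin h1 k : Fin (r + d))) id := by
    ext k l
    simp [hE, Matrix.mul_apply, ite_mul, Finset.sum_ite_eq, hf]
  have hWU : W * U = Matrix.fromBlocks
      (P.submatrix (fun k => (σ.orderIsoOfFin h1 k : Fin (r + d))) id) (E * S) 0 1 := by
    rw [hW, hU, Matrix.fromRows_mul_fromCols, hEP, hQP, hS]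
  have hdetWU : (W * U).det
      = (P.submatrix (fun k => (σ.orderIsoOfFin h1 k : Fin (r + d))) id).det := by
    rw [hWU, Matrix.det_fromBlocks_zero₂₁, Matrix.det_one, mul_one]
  -- compute W with columns reindexed by e
  have hWe : W.submatrix id e = Matrix.fromBlocks 1 0
      (Q.submatrix id (fun k => (σ.orderIsoOfFin h1 k : Fin (r + d))))
      (Q.submatrix id (fun k => (σᶜ.orderIsoOfFin h2 k : Fin (r + d)))) := by
    ext (a | a) (b | b)
    · by_cases h : a = b <;>
        simp [hW, hE, he_apply, Matrix.one_apply, hinj.eq_iff, h, eq_comm, hf]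
    · simp only [Matrix.submatrix_apply, id_eq, he_apply, hW, Matrix.fromRows_apply_inl,
        Matrix.fromBlocks_apply₁₂, Matrix.zero_apply, hE, Matrix.of_apply]
      rw [if_neg (fun h => Sum.inr_ne_inl (hinj h))]
    · simp [hW, he_apply, hf]
    · simp [hW, he_apply, hf]
  have hdetWe : (W.submatrix id e).det
      = (Q.submatrix id (fun k => (σᶜ.orderIsoOfFin h2 k : Fin (r + d)))).det := by
    rw [hWe, Matrix.det_fromBlocks_zero₁₂, Matrix.det_one, one_mul]
  -- put it together
  have key : (W.submatrix id e) * (U.submatrix e id) = W * U := by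
    have := Matrix.submatrix_mul_equiv W U (id : Fin r ⊕ Fin d → Fin r ⊕ Fin d) e
      (id : Fin r ⊕ Fin d → Fin r ⊕ Fin d)
    simp only [Matrix.submatrix_id_id] at this
    exact this
  calc (P.submatrix (fun k => (σ.orderIsoOfFin h1 k : Fin (r + d))) id).det.natAbs
      = (W * U).det.natAbs := by rw [hdetWU]
    _ = ((W.submatrix id e).det * (U.submatrix e id).det).natAbs := by
        rw [← Matrix.det_mul, key]
    _ = (W.submatrix id e).det.natAbs * (U.submatrix e id).det.natAbs := Int.natAbs_mul _ _
    _ = (Q.submatrix id (fun k => (σᶜ.orderIsoOfFin h2 k : Fin (r + d)))).det.natAbs := by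
        rw [hdetWe, hdetU, mul_one]
end

section
/- Let A = (α₁,…,αₙ) be vectors spanning an r-dimensional real vector space a*, let M(A) be the maximum over all bases ρ of a* consisting of partial sums of elements of A and all elements γ ∈ ρ, of the absolute values of the coordinates of each αᵢ in the basis ρ. Suppose ξ ∈ a* is τ-regular with respect to ΣA (all its coordinates in every such basis ρ exceed τ in absolute value). Then for every solution t = (t₁,…,tₙ) ∈ ℝⁿ of ∑ᵢ tᵢαᵢ = ξ there exists an r-element subset σ ⊆ {1,…,n} such that |tᵢ − tⱼ| ≥ τ/(n·M(A)) for all distinct i, j ∈ σ. -/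
/-- **Separation of coordinates of solutions of `∑ tᵢαᵢ = ξ` for sum-regular `ξ`.**
Let `α₁,…,αₙ` span the `r`-dimensional space `W` (= `a*`). A *sum-basis* is a
basis of `W` each of whose members is a partial sum `∑_{i∈η} αᵢ` of elements of
`A` (a basis `ρ ⊆ ΣA`). Let `M > 0` bound the absolute values of the coordinates
of every `αᵢ` in every sum-basis (the maximum `M(A)` has this property), and let
`ξ` be `τ`-regular w.r.t. `ΣA`: all coordinates of `ξ` in every sum-basis exceed
`τ` in absolute value. Then every solution `t ∈ ℝⁿ` of `∑ᵢ tᵢαᵢ = ξ` admits an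
`r`-element index set `σ` with `|tᵢ − tⱼ| ≥ τ/(n·M)` for all distinct `i,j ∈ σ`. -/
theorem stmt8 {W : Type*} [AddCommGroup W] [Module ℝ W] [FiniteDimensional ℝ W]
    {r n : ℕ} (hr : Module.finrank ℝ W = r)
    (α : Fin n → W) (hspan : Submodule.span ℝ (Set.range α) = ⊤)
    (M τ : ℝ) (hM : 0 < M)
    (hMbound : ∀ b : Module.Basis (Fin r) ℝ W,
      (∀ j, ∃ η : Finset (Fin n), b j = ∑ i ∈ η, α i) →
      ∀ (j : Fin r) (i : Fin n), |b.repr (α i) j| ≤ M)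
    (ξ : W)
    (hreg : ∀ b : Module.Basis (Fin r) ℝ W,
      (∀ j, ∃ η : Finset (Fin n), b j = ∑ i ∈ η, α i) →
      ∀ j : Fin r, |b.repr ξ j| > τ)
    (t : Fin n → ℝ) (ht : ∑ i, t i • α i = ξ) :
    ∃ σ : Finset (Fin n), σ.card = r ∧
      ∀ i ∈ σ, ∀ j ∈ σ, i ≠ j → |t i - t j| ≥ τ / (n * M) := by
  classical
  have hrn : r ≤ n := by
    have := finrank_le_of_span_eq_top hspan
    simpa [hr] using this
  set δ := τ / (n * M) with hδ
  by_cases hδpos : 0 < δ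
  swap
  · obtain ⟨σ, -, hcard⟩ := Finset.exists_subset_card_eq
      (show r ≤ (Finset.univ : Finset (Fin n)).card by simpa using hrn)
    exact ⟨σ, hcard, fun i _ j _ _ => le_trans (not_lt.1 hδpos) (abs_nonneg _)⟩
  -- n ≠ 0
  have hn0 : n ≠ 0 := by
    intro h
    rw [hδ, h] at hδpos
    simp at hδpos
  have hnpos : (0:ℝ) < n := by
    exact_mod_cast Nat.pos_of_ne_zero hn0
  -- maximal δ-separated set
  let F : Finset (Finset (Fin n)) :=
    Finset.univ.filter (fun σ => ∀ i ∈ σ, ∀ j ∈ σ, i ≠ j → δ ≤ |t i - t j|)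
  have hF : (∅ : Finset (Fin n)) ∈ F := by simp [F]
  obtain ⟨s, hsF, hsmax⟩ := F.exists_max_image Finset.card ⟨∅, hF⟩
  have hssep : ∀ i ∈ s, ∀ j ∈ s, i ≠ j → δ ≤ |t i - t j| := by
    have := Finset.mem_filter.1 hsF
    exact this.2
  by_cases hcard : r ≤ s.card
  · obtain ⟨σ, hσs, hσcard⟩ := Finset.exists_subset_card_eq hcard
    exact ⟨σ, hσcard, fun i hi j hj hij => hssep i (hσs hi) j (hσs hj) hij⟩
  exfalso
  push_neg at hcard
  -- every value is δ-close to some value in s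
  have hnear : ∀ i, ∃ j ∈ s, |t i - t j| < δ := by
    intro i
    by_contra h
    push_neg at h
    have his : i ∉ s := by
      intro hi
      have := h i hi
      simp at this
      exact absurd this (not_le.2 hδpos)
    have hins : insert i s ∈ F := by
      simp only [F, Finset.mem_filter, Finset.mem_univ, true_and]
      intro a ha b hb hab
      rcases Finset.mem_insert.1 ha with ha' | ha'
      · rcases Finset.mem_insert.1 hb with hb' | hb'
        · exact absurd (ha'.trans hb'.symm) hab
        · rw [ha']; exact h b hb'
      · rcases Finset.mem_insert.1 hb with hb' | hb'
        · rw [hb', abs_sub_comm]; exact h a ha'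
        · exact hssep a ha' b hb' hab
    have := hsmax _ hins
    rw [Finset.card_insert_of_notMem his] at this
    omega
  choose c hcs hcδ using hnear
  -- clusters
  let β : Fin n → W := fun j => ∑ i ∈ Finset.univ.filter (fun i => c i = j), α i
  -- key decomposition
  have hξ : ξ = (∑ j ∈ s, t j • β j) + ∑ i, (t i - t (c i)) • α i := by
    have h1 : ∑ j ∈ s, t j • β j = ∑ i, t (c i) • α i := by
      rw [← Finset.sum_fiberwise_of_maps_to (fun i _ => hcs i) (fun i => t (c i) • α i)]
      refine Finset.sum_congr rfl (fun j hj => ?_)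
      rw [Finset.smul_sum]
      refine Finset.sum_congr rfl (fun i hi => ?_)
      have : c i = j := (Finset.mem_filter.1 hi).2
      rw [this]
    rw [h1, ← ht]
    rw [← Finset.sum_add_distrib]
    refine Finset.sum_congr rfl (fun i _ => ?_)
    rw [← add_smul]
    ring_nf
  -- the set of partial sums
  let P : Set W := {w | ∃ η : Finset (Fin n), w = ∑ i ∈ η, α i}
  have hPspan : ⊤ ≤ Submodule.span ℝ P := by
    rw [← hspan]
    apply Submodule.span_mono
    rintro _ ⟨i, rfl⟩
    exact ⟨{i}, by simp⟩
  -- the finite set of cluster sums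
  let S0 : Finset W := s.image β
  have hS0P : (S0 : Set W) ⊆ P := by
    intro w hw
    obtain ⟨j, -, rfl⟩ := Finset.mem_image.1 hw
    exact ⟨_, rfl⟩
  have hS0lt : Submodule.span ℝ (S0 : Set W) < ⊤ := by
    apply span_lt_top_of_card_lt_finrank
    have : (S0 : Set W).toFinset.card = S0.card := by simp
    rw [this, hr]
    exact lt_of_le_of_lt (Finset.card_image_le) hcard
  obtain ⟨s', hs'sub, hs'span, hs'ind⟩ := exists_linearIndependent ℝ (S0 : Set W)
  replace hs'ind : LinearIndepOn ℝ id s' := hs'ind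
  have hs'P : s' ⊆ P := hs'sub.trans hS0P
  -- extend to a basis inside P
  let ext := LinearIndepOn.extend hs'ind hs'P
  let b0 : Module.Basis ext ℝ W := Module.Basis.extendLe hs'ind hs'P hPspan
  haveI : Fintype ext := FiniteDimensional.fintypeBasisIndex b0
  have hcardext : Fintype.card ext = r := by
    rw [← Module.finrank_eq_card_basis b0, hr]
  let e : ext ≃ Fin r := Fintype.equivFinOfCardEq hcardext
  let b : Module.Basis (Fin r) ℝ W := b0.reindex e
  have hbval : ∀ j : Fin r, b j = ((e.symm j : ext) : W) := by
    intro j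
    simp only [b, Module.Basis.reindex_apply]
    exact Module.Basis.extendLe_apply_self hs'ind hs'P hPspan (e.symm j)
  have hb : ∀ j, ∃ η : Finset (Fin n), b j = ∑ i ∈ η, α i := by
    intro j
    rw [hbval j]
    exact LinearIndepOn.extend_subset hs'ind hs'P (e.symm j).2
  -- find a coordinate not touching span S0
  have hrange : Set.range b = ext := by
    have : Set.range b = Set.range b0 := by
      ext x; constructor
      · rintro ⟨j, rfl⟩; exact ⟨e.symm j, by simp [b]⟩
      · rintro ⟨j, rfl⟩; exact ⟨e j, by simp [b]⟩
    rw [this]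
    exact Module.Basis.range_extendLe hs'ind hs'P hPspan
  obtain ⟨j0, hj0⟩ : ∃ j0 : Fin r, b j0 ∉ Submodule.span ℝ (S0 : Set W) := by
    by_contra h
    push_neg at h
    apply absurd hS0lt
    simp only [lt_top_iff_ne_top, ne_eq, not_not]
    rw [← top_le_iff, ← b.span_eq]
    apply Submodule.span_le.2
    rintro _ ⟨j, rfl⟩
    exact h j
  -- s' as an image of basis vectors
  have hs'range : s' ⊆ Set.range b := by
    rw [hrange]; exact LinearIndepOn.subset_extend hs'ind hs'P
  have hz : ∀ x ∈ Submodule.span ℝ (S0 : Set W), b.repr x j0 = 0 := by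
    intro x hx
    rw [← hs'span] at hx
    set J : Set (Fin r) := {j | b j ∈ s'} with hJ
    have himg : s' = b '' J := by
      apply Set.Subset.antisymm
      · intro y hy
        obtain ⟨j, rfl⟩ := hs'range hy
        exact ⟨j, hy, rfl⟩
      · rintro _ ⟨j, hj, rfl⟩
        exact hj
    rw [himg] at hx
    have hsupp := Module.Basis.repr_support_subset_of_mem_span b J hx
    by_contra hne
    have : j0 ∈ (b.repr x).support := Finsupp.mem_support_iff.2 hne
    have : j0 ∈ J := hsupp this
    exact hj0 (Submodule.subset_span (hs'sub this))
  -- the coordinate j0 of ξ is small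
  have hβspan : ∀ j ∈ s, β j ∈ Submodule.span ℝ (S0 : Set W) :=
    fun j hj => Submodule.subset_span (Finset.mem_image_of_mem β hj)
  have hrepr : b.repr ξ j0 = ∑ i, (t i - t (c i)) * b.repr (α i) j0 := by
    have := congrArg (fun x => b.coord j0 x) hξ
    simp only [Module.Basis.coord_apply] at this
    rw [this, map_add]
    have h1 : b.repr (∑ j ∈ s, t j • β j) j0 = 0 := by
      apply hz
      exact Submodule.sum_mem _ (fun j hj => Submodule.smul_mem _ _ (hβspan j hj))
    have h2 : b.repr (∑ i, (t i - t (c i)) • α i) j0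
        = ∑ i, (t i - t (c i)) * b.repr (α i) j0 := by
      rw [map_sum, Finsupp.finset_sum_apply]
      refine Finset.sum_congr rfl (fun i _ => ?_)
      rw [map_smul, Finsupp.smul_apply, smul_eq_mul]
    rw [Finsupp.add_apply, h1, h2, zero_add]
  have hbound : |b.repr ξ j0| ≤ τ := by
    rw [hrepr]
    calc |∑ i, (t i - t (c i)) * b.repr (α i) j0|
        ≤ ∑ i, |(t i - t (c i)) * b.repr (α i) j0| := Finset.abs_sum_le_sum_abs _ _
      _ ≤ ∑ _i : Fin n, δ * M := by
          refine Finset.sum_le_sum (fun i _ => ?_)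
          rw [abs_mul]
          exact mul_le_mul (le_of_lt (hcδ i)) (hMbound b hb j0 i) (abs_nonneg _)
            (le_of_lt hδpos)
      _ = n * (δ * M) := by rw [Finset.sum_const, Finset.card_univ, Fintype.card_fin,
          nsmul_eq_mul]
      _ = τ := by
          rw [hδ]
          field_simp
  exact absurd (hreg b hb j0) (not_lt.2 hbound)
end

section
/- Let A be a projective sequence in a* (all αᵢ in an open half-space), let C be a chamber (connected component of cone(A) minus the union of boundaries of simplicial subcones spanned by bases from A) whose closure contains κ = ∑ᵢ αᵢ, and let ξ ∈ C be regular with respect to ΣA. Suppose F is a flag in FL(A) such that ξ ∈ S(F,A) := ∑_{j=1}^{r−1} ℝ≥0 κⱼ^F + ℝκ. Then in the representation ξ = Bᵣκ + ∑_{j=1}^{r−1}(Bⱼ−B_{j+1})κⱼ^F with Bⱼ − B_{j+1} ≥ 0, the coefficient Bᵣ is strictly positive; in particular ξ ∈ S⁺(F,A) := ∑_{j=1}^r ℝ≥0 κⱼ^F. -/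
open scoped Classical

lemma posCara {V : Type*} [AddCommGroup V] [Module ℝ V] {n : ℕ} (v : Fin n → V) :
    ∀ (s : Finset (Fin n)) (c : Fin n → ℝ), (∀ i ∈ s, 0 ≤ c i) →
    ∃ τ : Finset (Fin n), τ ⊆ s ∧ (LinearIndependent ℝ fun i : ↥τ => v ↑i) ∧
      ∃ e : Fin n → ℝ, (∀ i ∈ τ, 0 < e i) ∧ ∑ i ∈ τ, e i • v i = ∑ i ∈ s, c i • v i := by
  intro s
  induction s using Finset.strongInduction with
  | _ s IH =>
    intro c hc
    set s' : Finset (Fin n) := s.filter (fun i => c i ≠ 0) with hs'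
    have hs's : s' ⊆ s := Finset.filter_subset _ _
    have hsum : ∑ i ∈ s', c i • v i = ∑ i ∈ s, c i • v i := by
      apply Finset.sum_subset hs's
      intro i hi hni
      have : c i = 0 := by
        by_contra h
        exact hni (Finset.mem_filter.2 ⟨hi, h⟩)
      simp [this]
    have hpos' : ∀ i ∈ s', 0 < c i := by
      intro i hi
      rcases Finset.mem_filter.1 hi with ⟨his, hne⟩
      exact lt_of_le_of_ne (hc i his) (Ne.symm hne)
    by_cases hli : LinearIndependent ℝ fun i : ↥s' => v ↑i
    · exact ⟨s', hs's, hli, c, hpos', hsum⟩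
    · rw [Fintype.not_linearIndependent_iff] at hli
      obtain ⟨g, hg0, i₁, hi₁⟩ := hli
      have core : ∀ gg : Fin n → ℝ, (∑ i ∈ s', gg i • v i = 0) →
          (∃ iP, iP ∈ s' ∧ 0 < gg iP) →
          ∃ τ : Finset (Fin n), τ ⊆ s ∧ (LinearIndependent ℝ fun i : ↥τ => v ↑i) ∧
          ∃ e : Fin n → ℝ, (∀ i ∈ τ, 0 < e i) ∧
            ∑ i ∈ τ, e i • v i = ∑ i ∈ s, c i • v i := by
        intro gg hggsum hex
        obtain ⟨iP, hiPs, hiPpos⟩ := hex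
        set P : Finset (Fin n) := s'.filter (fun i => 0 < gg i) with hP
        have hPne : P.Nonempty := ⟨iP, Finset.mem_filter.2 ⟨hiPs, hiPpos⟩⟩
        obtain ⟨i₀, hi₀P, hinf⟩ := Finset.exists_mem_eq_inf' hPne (fun i => c i / gg i)
        set θ : ℝ := P.inf' hPne (fun i => c i / gg i) with hθ
        have hi₀s' : i₀ ∈ s' := (Finset.mem_filter.1 hi₀P).1
        have hggi₀ : 0 < gg i₀ := (Finset.mem_filter.1 hi₀P).2
        have hθ0 : 0 ≤ θ := by
          rw [hinf]
          exact div_nonneg (le_of_lt (hpos' i₀ hi₀s')) (le_of_lt hggi₀)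
        set c' : Fin n → ℝ := fun i => c i - θ * gg i with hc'
        have hc'nn : ∀ i ∈ s', 0 ≤ c' i := by
          intro i hi
          by_cases hgi : 0 < gg i
          · have h1 : θ ≤ c i / gg i := Finset.inf'_le _ (Finset.mem_filter.2 ⟨hi, hgi⟩)
            have h2 := (le_div_iff₀ hgi).1 h1
            simp only [hc']
            linarith
          · push_neg at hgi
            have h3 : θ * gg i ≤ 0 := mul_nonpos_of_nonneg_of_nonpos hθ0 hgi
            have h4 := le_of_lt (hpos' i hi)
            simp only [hc']
            linarith
        have hc'i₀ : c' i₀ = 0 := by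
          simp only [hc', hinf]
          field_simp
          ring
        have hsum' : ∑ i ∈ s'.erase i₀, c' i • v i = ∑ i ∈ s, c i • v i := by
          rw [Finset.sum_erase _ (by simp [hc'i₀])]
          have heq : ∑ i ∈ s', c' i • v i
              = ∑ i ∈ s', c i • v i - θ • ∑ i ∈ s', gg i • v i := by
            rw [Finset.smul_sum, ← Finset.sum_sub_distrib]
            apply Finset.sum_congr rfl
            intro i _
            simp [hc', sub_smul, mul_smul]
          rw [heq, hggsum, smul_zero, sub_zero, hsum]
        have hss : s'.erase i₀ ⊂ s :=
          Finset.ssubset_of_subset_of_ssubset (Finset.erase_subset_erase _ hs's)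
            (Finset.erase_ssubset (hs's hi₀s'))
        obtain ⟨τ, hτsub, hτli, e, hepos, hesum⟩ :=
          IH _ hss c' (fun i hi => hc'nn i (Finset.mem_of_mem_erase hi))
        refine ⟨τ, ?_, hτli, e, hepos, by rw [hesum, hsum']⟩
        exact hτsub.trans ((Finset.erase_subset _ _).trans hs's)
      set gg : Fin n → ℝ := fun i => if h : i ∈ s' then g ⟨i, h⟩ else 0 with hgg
      have hggsum : ∑ i ∈ s', gg i • v i = 0 := by
        rw [← Finset.sum_attach s' (fun i => gg i • v i), ← hg0]
        apply Finset.sum_congr rfl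
        intro i _
        simp [hgg, i.2]
      by_cases hex : ∃ iP, iP ∈ s' ∧ 0 < gg iP
      · exact core gg hggsum hex
      · apply core (fun i => -gg i)
        · rw [← neg_zero, ← hggsum, ← Finset.sum_neg_distrib]
          apply Finset.sum_congr rfl
          intro i _
          simp [neg_smul]
        · push_neg at hex
          refine ⟨↑i₁, i₁.2, ?_⟩
          have h1 : gg ↑i₁ ≠ 0 := by
            simpa [hgg, Finset.coe_mem] using hi₁
          have h2 := hex ↑i₁ i₁.2
          cases lt_or_eq_of_le h2 with
          | inl h => linarith
          | inr h => exact absurd h h1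


lemma rangeCoeFinset {W : Type*} {n : ℕ} (α : Fin n → W) (τ : Finset (Fin n)) :
    (Set.range fun i : ↥τ => α ↑i) = α '' ↑τ := by
  ext x
  constructor
  · rintro ⟨⟨i, hi⟩, rfl⟩
    exact ⟨i, hi, rfl⟩
  · rintro ⟨i, hi, rfl⟩
    exact ⟨⟨i, hi⟩, rfl⟩

lemma liInsertIndex {W : Type*} [AddCommGroup W] [Module ℝ W]
    {n : ℕ} (α : Fin n → W) (τ : Finset (Fin n))
    (hli : LinearIndependent ℝ fun i : ↥τ => α ↑i)
    (i₀ : Fin n) (hi₀ : α i₀ ∉ Submodule.span ℝ (α '' ↑τ)) :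
    LinearIndependent ℝ fun i : ↥(insert i₀ τ) => α ↑i := by
  classical
  rw [Fintype.linearIndependent_iff]
  intro g hg
  set gg : Fin n → ℝ := fun i => if h : i ∈ insert i₀ τ then g ⟨i, h⟩ else 0 with hgg
  have hggval : ∀ (i : ↥(insert i₀ τ)), gg ↑i = g i := by
    intro i
    simp only [hgg]
    rw [dif_pos i.2]
  have hi₀τ : i₀ ∉ τ := fun h => hi₀ (Submodule.subset_span ⟨i₀, h, rfl⟩)
  have hsum : ∑ i ∈ insert i₀ τ, gg i • α i = 0 := by
    rw [← Finset.sum_attach (insert i₀ τ) (fun i => gg i • α i), ← hg]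
    exact Finset.sum_congr rfl (fun i _ => by rw [hggval i])
  rw [Finset.sum_insert hi₀τ] at hsum
  have hττ : ∑ i ∈ τ, gg i • α i ∈ Submodule.span ℝ (α '' ↑τ) :=
    Submodule.sum_mem _ (fun i hi =>
      Submodule.smul_mem _ _ (Submodule.subset_span ⟨i, hi, rfl⟩))
  have hgg0 : gg i₀ = 0 := by
    by_contra hne
    apply hi₀
    have h1 : gg i₀ • α i₀ = -∑ i ∈ τ, gg i • α i := by
      rw [eq_neg_iff_add_eq_zero]; exact hsum
    have h2 : α i₀ = (gg i₀)⁻¹ • (-∑ i ∈ τ, gg i • α i) := by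
      rw [← h1, ← smul_assoc, smul_eq_mul, inv_mul_cancel₀ hne, one_smul]
    rw [h2]
    exact Submodule.smul_mem _ _ (Submodule.neg_mem _ hττ)
  have hτ0 : ∑ i ∈ τ, gg i • α i = 0 := by
    rw [hgg0, zero_smul, zero_add] at hsum
    exact hsum
  have hall : ∀ i ∈ τ, gg i = 0 := by
    have hli' := Fintype.linearIndependent_iff.1 hli
    have hconv : ∑ i : ↥τ, gg ↑i • α ↑i = 0 := by
      rw [Finset.sum_coe_sort τ (fun i => gg i • α i)]
      exact hτ0
    intro i hi
    exact hli' (fun i => gg ↑i) hconv ⟨i, hi⟩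
  intro i
  rw [← hggval i]
  rcases Finset.mem_insert.1 i.2 with h | h
  · rw [show (i : Fin n) = i₀ from h]
    exact hgg0
  · exact hall _ h

lemma extendToBasisIndex {W : Type*} [AddCommGroup W] [Module ℝ W] [FiniteDimensional ℝ W]
    {r n : ℕ} (hr : Module.finrank ℝ W = r) (α : Fin n → W)
    (hspan : Submodule.span ℝ (Set.range α) = ⊤)
    (τ : Finset (Fin n)) (hli : LinearIndependent ℝ fun i : ↥τ => α ↑i) :
    ∃ σ : Finset (Fin n), τ ⊆ σ ∧ σ.card = r ∧
      LinearIndependent ℝ fun i : ↥σ => α ↑i := by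
  classical
  have main : ∀ m (τ : Finset (Fin n)), n - τ.card ≤ m →
      (LinearIndependent ℝ fun i : ↥τ => α ↑i) →
      ∃ σ : Finset (Fin n), τ ⊆ σ ∧ σ.card = r ∧
        LinearIndependent ℝ fun i : ↥σ => α ↑i := by
    intro m
    induction m with
    | zero =>
      intro τ hm hliτ
      -- τ = univ
      have : n ≤ τ.card := Nat.le_of_sub_eq_zero (Nat.le_zero.1 hm)
      have hτu : τ = Finset.univ := by
        apply Finset.eq_univ_of_card
        exact le_antisymm (by simpa using Finset.card_le_univ τ) (by simpa using this)
      subst hτu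
      have hspanτ : Submodule.span ℝ (α '' ↑(Finset.univ : Finset (Fin n))) = ⊤ := by
        rw [show (α '' ↑(Finset.univ : Finset (Fin n))) = Set.range α by simp]
        exact hspan
      have hB : Submodule.span ℝ (Set.range fun i : ↥(Finset.univ : Finset (Fin n)) => α ↑i) = ⊤ := by
        rw [rangeCoeFinset]
        exact hspanτ
      let B : Module.Basis ↥(Finset.univ : Finset (Fin n)) ℝ W := Module.Basis.mk hliτ (le_of_eq hB.symm)
      refine ⟨Finset.univ, Finset.subset_univ _, ?_, hliτ⟩
      rw [← hr, Module.finrank_eq_card_basis B, Fintype.card_coe]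
    | succ m IH =>
      intro τ hm hliτ
      by_cases hsp : Submodule.span ℝ (α '' ↑τ) = ⊤
      · -- τ already spans: it's a basis
        have hB : Submodule.span ℝ (Set.range fun i : ↥τ => α ↑i) = ⊤ := by
          rw [rangeCoeFinset]; exact hsp
        let B : Module.Basis ↥τ ℝ W := Module.Basis.mk hliτ (le_of_eq hB.symm)
        refine ⟨τ, le_refl _, ?_, hliτ⟩
        rw [← hr, Module.finrank_eq_card_basis B, Fintype.card_coe]
      · -- find a vector outside the span
        have hex : ∃ i : Fin n, α i ∉ Submodule.span ℝ (α '' ↑τ) := by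
          by_contra hno
          push_neg at hno
          apply hsp
          apply le_antisymm le_top
          rw [← hspan]
          apply Submodule.span_le.2
          rintro x ⟨i, rfl⟩
          exact hno i
        obtain ⟨i₀, hi₀⟩ := hex
        have hi₀τ : i₀ ∉ τ := fun h => hi₀ (Submodule.subset_span ⟨i₀, h, rfl⟩)
        have hli' := liInsertIndex α τ hliτ i₀ hi₀
        have hcard : n - (insert i₀ τ).card ≤ m := by
          rw [Finset.card_insert_of_notMem hi₀τ]
          omega
        obtain ⟨σ, hsub, hc, hliσ⟩ := IH (insert i₀ τ) hcard hli'
        exact ⟨σ, (Finset.subset_insert _ _).trans hsub, hc, hliσ⟩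
  exact main (n - τ.card) τ (le_refl _) hli

/-- The cone generated by `α i`, `i ∈ s`. -/
def Kset {W : Type*} [AddCommGroup W] [Module ℝ W] {n : ℕ}
    (α : Fin n → W) (s : Finset (Fin n)) : Set W :=
  {x | ∃ c : Fin n → ℝ, (∀ i, 0 ≤ c i) ∧ x = ∑ i ∈ s, c i • α i}

lemma coordSum {W : Type*} [AddCommGroup W] [Module ℝ W] {n : ℕ}
    (α : Fin n → W) {σ : Finset (Fin n)}
    (B : Module.Basis ↥σ ℝ W) (hB : ∀ i : ↥σ, B i = α ↑i)
    {t : Finset (Fin n)} (ht : t ⊆ σ) (cc : Fin n → ℝ) (b : ↥σ) :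
    B.repr (∑ i ∈ t, cc i • α i) b = if ↑b ∈ t then cc ↑b else 0 := by
  classical
  have h1 : ∀ i (hi : i ∈ t), (B.repr (α i)) b = if i = ↑b then 1 else 0 := by
    intro i hi
    rw [← hB ⟨i, ht hi⟩, B.repr_self_apply]
    by_cases h : i = ↑b
    · rw [if_pos (Subtype.ext h), if_pos h]
    · rw [if_neg (fun hc => h (congrArg Subtype.val hc)), if_neg h]
  have h2 : B.repr (∑ i ∈ t, cc i • α i) b = ∑ i ∈ t, cc i * ((B.repr (α i)) b) := by
    rw [map_sum, Finsupp.finset_sum_apply]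
    apply Finset.sum_congr rfl
    intro i _
    rw [map_smul, Finsupp.smul_apply, smul_eq_mul]
  rw [h2]
  rw [Finset.sum_congr rfl (fun i hi => by rw [h1 i hi])]
  rw [show ∀ s : Finset (Fin n), ∑ i ∈ s, cc i * (if i = ↑b then 1 else 0)
      = ∑ i ∈ s, (if i = ↑b then cc i else 0) from fun s =>
    Finset.sum_congr rfl (fun i _ => by by_cases h : i = ↑b <;> simp [h])]
  rw [Finset.sum_ite_eq' t ↑b cc]

/-- Membership in `Kset α t` via coordinates w.r.t. a basis `B` extending `t`. -/
lemma memKiff {W : Type*} [AddCommGroup W] [Module ℝ W] {n : ℕ}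
    (α : Fin n → W) {σ : Finset (Fin n)}
    (B : Module.Basis ↥σ ℝ W) (hB : ∀ i : ↥σ, B i = α ↑i)
    {t : Finset (Fin n)} (ht : t ⊆ σ) (x : W) :
    x ∈ Kset α t ↔ ∀ b : ↥σ, 0 ≤ B.repr x b ∧ (↑b ∉ t → B.repr x b = 0) := by
  classical
  constructor
  · rintro ⟨cc, hccnn, rfl⟩ b
    rw [coordSum α B hB ht cc b]
    constructor
    · by_cases h : ↑b ∈ t
      · rw [if_pos h]; exact hccnn _
      · rw [if_neg h]
    · intro h; rw [if_neg h]
  · intro h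
    set cc : Fin n → ℝ := fun i => if h' : i ∈ σ then B.repr x ⟨i, h'⟩ else 0 with hcc
    have hccval : ∀ b : ↥σ, cc ↑b = B.repr x b := by
      intro b
      simp only [hcc]
      rw [dif_pos b.2]
    refine ⟨cc, ?_, ?_⟩
    · intro i
      by_cases h' : i ∈ σ
      · have := (h ⟨i, h'⟩).1
        simpa only [hcc, dif_pos h'] using this
      · simp only [hcc, dif_neg h']
        exact le_refl 0
    · have e1 : ∑ i ∈ σ, cc i • α i = x := by
        conv_rhs => rw [← Module.Basis.sum_repr B x]
        rw [← Finset.sum_coe_sort σ (fun i => cc i • α i)]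
        apply Finset.sum_congr rfl
        intro b _
        rw [hB, hccval]
      have e2 : ∑ i ∈ t, cc i • α i = ∑ i ∈ σ, cc i • α i := by
        apply Finset.sum_subset ht
        intro i hi hni
        have : cc i = 0 := by
          rw [show cc i = B.repr x ⟨i, hi⟩ from hccval ⟨i, hi⟩]
          exact (h ⟨i, hi⟩).2 hni
        rw [this, zero_smul]
      rw [e2, e1]

section topo
variable {W : Type*} [AddCommGroup W] [Module ℝ W] [FiniteDimensional ℝ W]
  [TopologicalSpace W] [IsTopologicalAddGroup W] [ContinuousSMul ℝ W] [T2Space W]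

lemma coordCont {n : ℕ} (α : Fin n → W) {σ : Finset (Fin n)}
    (B : Module.Basis ↥σ ℝ W) (b : ↥σ) : Continuous (fun x => B.repr x b) :=
  LinearMap.continuous_of_finiteDimensional (B.coord b)

lemma isClosed_Kset {n : ℕ} (α : Fin n → W) {σ : Finset (Fin n)}
    (B : Module.Basis ↥σ ℝ W) (hB : ∀ i : ↥σ, B i = α ↑i)
    {t : Finset (Fin n)} (ht : t ⊆ σ) : IsClosed (Kset α t) := by
  classical
  have : Kset α t = ⋂ b : ↥σ,
      ({x | 0 ≤ B.repr x b} ∩ {x | ↑b ∈ t ∨ B.repr x b = 0}) := by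
    ext x
    rw [Set.mem_iInter]
    rw [memKiff α B hB ht x]
    constructor
    · intro h b
      refine ⟨(h b).1, ?_⟩
      by_cases hbt : ↑b ∈ t
      · exact Or.inl hbt
      · exact Or.inr ((h b).2 hbt)
    · intro h b
      refine ⟨(h b).1, fun hbt => ?_⟩
      rcases (h b).2 with h' | h'
      · exact absurd h' hbt
      · exact h'
  rw [this]
  apply isClosed_iInter
  intro b
  apply IsClosed.inter
  · exact isClosed_le continuous_const (coordCont α B b)
  · by_cases hbt : ↑b ∈ t
    · have : {x : W | ↑b ∈ t ∨ B.repr x b = 0} = Set.univ := by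
        ext x; simp [hbt]
      rw [this]; exact isClosed_univ
    · have : {x : W | ↑b ∈ t ∨ B.repr x b = 0} = {x | B.repr x b = 0} := by
        ext x; simp [hbt]
      rw [this]
      exact isClosed_eq (coordCont α B b) continuous_const

lemma pos_mem_interior {n : ℕ} (α : Fin n → W) {σ : Finset (Fin n)}
    (B : Module.Basis ↥σ ℝ W) (hB : ∀ i : ↥σ, B i = α ↑i) (x : W)
    (h : ∀ b : ↥σ, 0 < B.repr x b) : x ∈ interior (Kset α σ) := by
  apply mem_interior.2
  refine ⟨{y | ∀ b : ↥σ, 0 < B.repr y b}, ?_, ?_, h⟩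
  · intro y hy
    rw [memKiff α B hB (le_refl σ) y]
    exact fun b => ⟨le_of_lt (hy b), fun hb => absurd b.2 hb⟩
  · have : {y : W | ∀ b : ↥σ, 0 < B.repr y b} = ⋂ b : ↥σ, {y | 0 < B.repr y b} := by
      ext y; simp [Set.mem_iInter]
    rw [this]
    apply isOpen_iInter_of_finite
    intro b
    exact isOpen_lt continuous_const (coordCont α B b)

lemma interior_pos {n : ℕ} (α : Fin n → W) {σ : Finset (Fin n)}
    (B : Module.Basis ↥σ ℝ W) (hB : ∀ i : ↥σ, B i = α ↑i) (x : W)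
    (h : x ∈ interior (Kset α σ)) (b : ↥σ) : 0 < B.repr x b := by
  classical
  -- the path ε ↦ x - ε • α ↑b enters Kset σ for small ε > 0
  have hcont : Continuous (fun ε : ℝ => x - ε • α ↑b) := by
    apply Continuous.sub continuous_const
    exact Continuous.smul continuous_id continuous_const
  have h0 : (fun ε : ℝ => x - ε • α ↑b) 0 ∈ interior (Kset α σ) := by
    simpa using h
  have hnhds : (fun ε : ℝ => x - ε • α ↑b) ⁻¹' interior (Kset α σ) ∈ nhds (0 : ℝ) :=
    hcont.continuousAt.preimage_mem_nhds (isOpen_interior.mem_nhds h0)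
  obtain ⟨ε, hεpos, hε⟩ := Metric.eventually_nhds_iff_ball.1
    (Filter.eventually_iff_exists_mem.2 ⟨_, hnhds, fun y hy => hy⟩)
  have hmem : x - (ε/2) • α ↑b ∈ Kset α σ := by
    have : (ε/2) ∈ Metric.ball (0:ℝ) ε := by
      rw [Metric.mem_ball, dist_zero_right, Real.norm_eq_abs, abs_of_pos (by linarith)]
      linarith
    exact interior_subset (hε _ this)
  have := ((memKiff α B hB (le_refl σ) _).1 hmem b).1
  have hrepr : B.repr (x - (ε/2) • α ↑b) b = B.repr x b - ε/2 := by
    rw [map_sub, map_smul, Finsupp.sub_apply, Finsupp.smul_apply, ← hB b,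
      B.repr_self_apply, if_pos rfl, smul_eq_mul, mul_one]
  rw [hrepr] at this
  linarith

end topo

lemma Kset_sub_span {W : Type*} [AddCommGroup W] [Module ℝ W] {n : ℕ}
    (α : Fin n → W) (t : Finset (Fin n)) :
    Kset α t ⊆ (Submodule.span ℝ (α '' ↑t) : Set W) := by
  rintro x ⟨cc, _, rfl⟩
  exact Submodule.sum_mem _ (fun i hi =>
    Submodule.smul_mem _ _ (Submodule.subset_span ⟨i, hi, rfl⟩))

lemma spanProper {W : Type*} [AddCommGroup W] [Module ℝ W] [FiniteDimensional ℝ W]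
    {r n : ℕ} (hr : Module.finrank ℝ W = r) (α : Fin n → W)
    {t : Finset (Fin n)} (ht : t.card < r) :
    Submodule.span ℝ (α '' ↑t) ≠ ⊤ := by
  intro htop
  have h1 : Submodule.span ℝ (α '' ↑t) = Submodule.span ℝ ↑(t.image α) := by
    rw [Finset.coe_image]
  have h2 : Module.finrank ℝ (Submodule.span ℝ (↑(t.image α) : Set W)) ≤ (t.image α).card :=
    finrank_span_finset_le_card (t.image α)
  have h3 : Module.finrank ℝ (Submodule.span ℝ (α '' ↑t)) ≤ t.card := by
    rw [h1]
    exact h2.trans (Finset.card_image_le)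
  rw [htop, finrank_top ℝ W, hr] at h3
  omega

/-- The closed "singular" superset: union of the cones over independent
non-spanning index sets. -/
def SAset {W : Type*} [AddCommGroup W] [Module ℝ W] {n : ℕ} (α : Fin n → W) : Set W :=
  ⋃ τ ∈ {τ : Finset (Fin n) | (LinearIndependent ℝ fun i : ↥τ => α ↑i) ∧
      Submodule.span ℝ (α '' ↑τ) ≠ ⊤}, Kset α τ

lemma mem_SAset_of {W : Type*} [AddCommGroup W] [Module ℝ W] {n : ℕ}
    (α : Fin n → W) {τ : Finset (Fin n)} {x : W}
    (h1 : LinearIndependent ℝ fun i : ↥τ => α ↑i)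
    (h2 : Submodule.span ℝ (α '' ↑τ) ≠ ⊤) (h3 : x ∈ Kset α τ) :
    x ∈ SAset α :=
  Set.mem_biUnion (Set.mem_setOf.2 ⟨h1, h2⟩) h3

lemma SAset_closed {W : Type*} [AddCommGroup W] [Module ℝ W] [FiniteDimensional ℝ W]
    [TopologicalSpace W] [IsTopologicalAddGroup W] [ContinuousSMul ℝ W] [T2Space W]
    {r n : ℕ} (hr : Module.finrank ℝ W = r) (hrpos : 0 < r) (α : Fin n → W)
    (hspan : Submodule.span ℝ (Set.range α) = ⊤) :
    IsClosed (SAset α) := by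
  apply Set.Finite.isClosed_biUnion (Set.toFinite _)
  intro τ hτ
  obtain ⟨hli, _⟩ := hτ
  obtain ⟨σ, hτσ, hcard, hliσ⟩ := extendToBasisIndex hr α hspan τ hli
  have hσpos : 0 < σ.card := by rw [hcard]; exact hrpos
  obtain ⟨i₀, hi₀⟩ := Finset.card_pos.1 hσpos
  haveI : Nonempty ↥σ := ⟨⟨i₀, hi₀⟩⟩
  let B : Module.Basis ↥σ ℝ W :=
    basisOfLinearIndependentOfCardEqFinrank hliσ (by rw [Fintype.card_coe, hcard, hr])
  have hB : ∀ i : ↥σ, B i = α ↑i := fun i =>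
    congrFun (coe_basisOfLinearIndependentOfCardEqFinrank hliσ _) i
  exact isClosed_Kset α B hB hτσ

lemma frontier_sub_SAset {W : Type*} [AddCommGroup W] [Module ℝ W] [FiniteDimensional ℝ W]
    [TopologicalSpace W] [IsTopologicalAddGroup W] [ContinuousSMul ℝ W] [T2Space W]
    {r n : ℕ} (hr : Module.finrank ℝ W = r) (hrpos : 0 < r) (α : Fin n → W)
    {σ : Finset (Fin n)} (hcard : σ.card = r)
    (hliσ : LinearIndependent ℝ fun i : ↥σ => α ↑i) :
    frontier (Kset α σ) ⊆ SAset α := by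
  classical
  have hσpos : 0 < σ.card := by rw [hcard]; exact hrpos
  obtain ⟨i₀, hi₀⟩ := Finset.card_pos.1 hσpos
  haveI : Nonempty ↥σ := ⟨⟨i₀, hi₀⟩⟩
  let B : Module.Basis ↥σ ℝ W :=
    basisOfLinearIndependentOfCardEqFinrank hliσ (by rw [Fintype.card_coe, hcard, hr])
  have hB : ∀ i : ↥σ, B i = α ↑i := fun i =>
    congrFun (coe_basisOfLinearIndependentOfCardEqFinrank hliσ _) i
  intro x hx
  have hKclosed : IsClosed (Kset α σ) := isClosed_Kset α B hB (le_refl σ)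
  rw [hKclosed.frontier_eq] at hx
  have hxK : x ∈ Kset α σ := hx.1
  have hxint : x ∉ interior (Kset α σ) := hx.2
  have hcoords := (memKiff α B hB (le_refl σ) x).1 hxK
  -- some coordinate vanishes
  have hex : ∃ b : ↥σ, B.repr x b = 0 := by
    by_contra hno
    push_neg at hno
    apply hxint
    apply pos_mem_interior α B hB x
    intro b
    exact lt_of_le_of_ne (hcoords b).1 (Ne.symm (hno b))
  obtain ⟨b₀, hb₀⟩ := hex
  -- x lies in the cone over σ.erase b₀
  have hxKe : x ∈ Kset α (σ.erase ↑b₀) := by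
    rw [memKiff α B hB (Finset.erase_subset _ _) x]
    intro b
    refine ⟨(hcoords b).1, fun hbe => ?_⟩
    have hbσ : ↑b ∈ σ := b.2
    have : (b : Fin n) = ↑b₀ := by
      by_contra hne
      exact hbe (Finset.mem_erase.2 ⟨hne, hbσ⟩)
    have hbb : b = b₀ := Subtype.ext this
    rw [hbb]
    exact hb₀
  -- independence on the erased set
  have hlie : LinearIndependent ℝ fun i : ↥(σ.erase ↑b₀) => α ↑i := by
    have hinj : Function.Injective
        (fun i : ↥(σ.erase ↑b₀) => (⟨↑i, Finset.mem_of_mem_erase i.2⟩ : ↥σ)) := by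
      intro a b hab
      exact Subtype.ext (by simpa using hab)
    exact hliσ.comp _ hinj
  have hproper : Submodule.span ℝ (α '' ↑(σ.erase ↑b₀)) ≠ ⊤ := by
    apply spanProper hr α
    rw [Finset.card_erase_of_mem b₀.2, hcard]
    omega
  exact mem_SAset_of α hlie hproper hxKe

lemma liUnionQuot {W : Type*} [AddCommGroup W] [Module ℝ W] {n : ℕ}
    (α : Fin n → W) (τ ρ : Finset (Fin n))
    (hliτ : LinearIndependent ℝ fun i : ↥τ => α ↑i)
    (hliρ : LinearIndependent ℝ fun i : ↥ρ =>
      (Submodule.span ℝ (α '' ↑τ)).mkQ (α ↑i)) :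
    Disjoint τ ρ ∧ LinearIndependent ℝ fun i : ↥(τ ∪ ρ) => α ↑i := by
  classical
  set V := Submodule.span ℝ (α '' ↑τ) with hV
  have hmemV : ∀ i ∈ τ, α i ∈ V := fun i hi => Submodule.subset_span ⟨i, hi, rfl⟩
  have hdisj : Disjoint τ ρ := by
    rw [Finset.disjoint_left]
    intro i hiτ hiρ
    have h1 : V.mkQ (α i) ≠ 0 := hliρ.ne_zero ⟨i, hiρ⟩
    apply h1
    rw [Submodule.mkQ_apply, Submodule.Quotient.mk_eq_zero]
    exact hmemV i hiτ
  refine ⟨hdisj, ?_⟩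
  rw [Fintype.linearIndependent_iff]
  intro g hg
  set gg : Fin n → ℝ := fun i => if h : i ∈ τ ∪ ρ then g ⟨i, h⟩ else 0 with hgg
  have hggval : ∀ (i : ↥(τ ∪ ρ)), gg ↑i = g i := by
    intro i
    simp only [hgg]
    rw [dif_pos i.2]
  have hsum : ∑ i ∈ τ ∪ ρ, gg i • α i = 0 := by
    rw [← Finset.sum_attach (τ ∪ ρ) (fun i => gg i • α i), ← hg]
    exact Finset.sum_congr rfl (fun i _ => by rw [hggval i])
  rw [Finset.sum_union hdisj] at hsum
  -- push to the quotient
  have hq : ∑ i ∈ ρ, gg i • V.mkQ (α i) = 0 := by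
    have := congrArg V.mkQ hsum
    rw [map_add, map_sum, map_sum, map_zero] at this
    have hτ0 : ∑ i ∈ τ, V.mkQ (gg i • α i) = 0 := by
      apply Finset.sum_eq_zero
      intro i hi
      rw [map_smul]
      rw [show V.mkQ (α i) = 0 from by
        rw [Submodule.mkQ_apply, Submodule.Quotient.mk_eq_zero]; exact hmemV i hi]
      rw [smul_zero]
    rw [hτ0, zero_add] at this
    rw [← this]
    exact Finset.sum_congr rfl (fun i _ => by rw [map_smul])
  have hgρ : ∀ i ∈ ρ, gg i = 0 := by
    have hli' := Fintype.linearIndependent_iff.1 hliρ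
    have hconv : ∑ i : ↥ρ, gg ↑i • V.mkQ (α ↑i) = 0 := by
      rw [Finset.sum_coe_sort ρ (fun i => gg i • V.mkQ (α i))]
      exact hq
    intro i hi
    exact hli' (fun i => gg ↑i) hconv ⟨i, hi⟩
  have hτsum : ∑ i ∈ τ, gg i • α i = 0 := by
    have hρ0 : ∑ i ∈ ρ, gg i • α i = 0 :=
      Finset.sum_eq_zero (fun i hi => by rw [hgρ i hi, zero_smul])
    rw [hρ0, add_zero] at hsum
    exact hsum
  have hgτ : ∀ i ∈ τ, gg i = 0 := by
    have hli' := Fintype.linearIndependent_iff.1 hliτ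
    have hconv : ∑ i : ↥τ, gg ↑i • α ↑i = 0 := by
      rw [Finset.sum_coe_sort τ (fun i => gg i • α i)]
      exact hτsum
    intro i hi
    exact hli' (fun i => gg ↑i) hconv ⟨i, hi⟩
  intro i
  rw [← hggval i]
  rcases Finset.mem_union.1 i.2 with h | h
  · exact hgτ _ h
  · exact hgρ _ h


set_option maxHeartbeats 1000000 in
open scoped Classical in
/-- **Positivity of `Bᵣ` (ξ near `κ` lies in `S⁺(F,A)`).**
Let `A = (α₁,…,αₙ)` be a projective sequence spanning the `r`-dimensional
space `W` (= `a*`), `C` a chamber (a connected component of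
`cone(A) ∖ cone_sing(A)`, with `cone_sing(A)` the union of the frontiers of the
simplicial cones spanned by bases extracted from `A`) whose closure contains
`κ = ∑ᵢ αᵢ`, and `ξ ∈ C` regular with respect to `ΣA` (it lies on no proper
subspace spanned by partial sums of elements of `A`). Let `F ∈ FL(A)` be a flag
and suppose `ξ ∈ S(F,A) = ∑_{j<r} ℝ≥0·κⱼ^F + ℝ·κ`, written as
`ξ = ∑ⱼ cⱼ κⱼ^F` with `cⱼ ≥ 0` for `j < r` (the coefficients `Bⱼ − B_{j+1}`)
and the coefficient `cᵣ` of `κ = κᵣ^F` (i.e. `Bᵣ`) unrestricted. Then `cᵣ > 0`;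
in particular `ξ ∈ S⁺(F,A)`. -/
theorem stmt13 {W : Type*} [AddCommGroup W] [Module ℝ W] [FiniteDimensional ℝ W]
    [TopologicalSpace W] [IsTopologicalAddGroup W] [ContinuousSMul ℝ W] [T2Space W]
    {r n : ℕ} (hr : Module.finrank ℝ W = r)
    (α : Fin n → W)
    (hproj : ∃ ℓ : Module.Dual ℝ W, ∀ i, 0 < ℓ (α i))
    (coneA : Set W)
    (hconeA : coneA = {x | ∃ c : Fin n → ℝ, (∀ i, 0 ≤ c i) ∧ x = ∑ i, c i • α i})
    (sing : Set W)
    (hsing : sing = ⋃ (σ : Finset (Fin n))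
        (_ : σ.card = r ∧ LinearIndependent ℝ fun i : σ => α i.1),
      frontier {x | ∃ c : Fin n → ℝ, (∀ i, 0 ≤ c i) ∧ x = ∑ i ∈ σ, c i • α i})
    (C : Set W)
    (hchamber : ∃ x ∈ coneA \ sing, C = connectedComponentIn (coneA \ sing) x)
    (hκC : (∑ i, α i) ∈ closure C)
    (ξ : W) (hξC : ξ ∈ C)
    (hreg : ∀ s : Set W, s ⊆ {x | ∃ η : Finset (Fin n), x = ∑ i ∈ η, α i} →
      Submodule.span ℝ s ≠ ⊤ → ξ ∉ Submodule.span ℝ s)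
    (F : Fin (r + 1) → Submodule ℝ W)
    (hmono : Monotone F) (h0 : F 0 = ⊥) (htop : F (Fin.last r) = ⊤)
    (hdim : ∀ j, Module.finrank ℝ (F j) = j)
    (hFL : ∀ j, F j ≤ Submodule.span ℝ {x | x ∈ Set.range α ∧ x ∈ F j})
    (c : Fin r → ℝ)
    (hc : ∀ j : Fin r, (j : ℕ) + 1 < r → 0 ≤ c j)
    (hξ : ξ = ∑ j,
      c j • (∑ i ∈ Finset.univ.filter (fun i => α i ∈ F j.succ), α i)) :
    ∀ j : Fin r, (j : ℕ) + 1 = r → 0 < c j := by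
  classical
  intro j hj
  have hrpos : 0 < r := by omega
  set κ : W := ∑ i, α i with hκ
  -- span of the α's is everything
  have hspan : Submodule.span ℝ (Set.range α) = ⊤ := by
    apply le_antisymm le_top
    have h1 := hFL (Fin.last r)
    rw [htop] at h1
    refine le_trans h1 (Submodule.span_mono ?_)
    intro x hx
    exact hx.1
  -- the subspace U = F_{r-1}
  set U : Submodule ℝ W := F j.castSucc with hU
  have hjcs : ((j.castSucc : Fin (r+1)) : ℕ) = (j : ℕ) := rfl
  have hUdim : Module.finrank ℝ U = (j : ℕ) := by
    rw [hU, hdim j.castSucc]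
    exact Fin.coe_castSucc j
  have hUne : U ≠ ⊤ := by
    intro h
    rw [h, finrank_top ℝ W, hr] at hUdim
    omega
  have hξU : ξ ∉ U := by
    intro hmem
    have hsub : {x : W | x ∈ Set.range α ∧ x ∈ U} ⊆
        {x | ∃ η : Finset (Fin n), x = ∑ i ∈ η, α i} := by
      rintro x ⟨⟨i, rfl⟩, _⟩
      exact ⟨{i}, by simp⟩
    have hle : Submodule.span ℝ {x : W | x ∈ Set.range α ∧ x ∈ U} ≤ U :=
      Submodule.span_le.2 (fun x hx => hx.2)
    have hne : Submodule.span ℝ {x : W | x ∈ Set.range α ∧ x ∈ U} ≠ ⊤ := by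
      intro h
      exact hUne (le_antisymm le_top (h ▸ hle))
    exact hreg _ hsub hne (hFL j.castSucc hmem)
  -- the last κ-term is κ itself
  have hηj : Finset.univ.filter (fun i => α i ∈ F j.succ) = Finset.univ := by
    have hlast : (j.succ : Fin (r+1)) = Fin.last r := by
      apply Fin.ext
      simp [hj]
    rw [hlast, htop]
    apply Finset.filter_true_of_mem
    intro i _
    exact Submodule.mem_top
  -- split off the j-th term
  set p : W := ∑ j' ∈ Finset.univ.erase j,
    c j' • (∑ i ∈ Finset.univ.filter (fun i => α i ∈ F j'.succ), α i) with hp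
  have hsplit : ξ = c j • κ + p := by
    rw [hξ, ← Finset.add_sum_erase _ _ (Finset.mem_univ j), hηj, hp, hκ]
  -- each other term lies in U
  have hterm : ∀ j' : Fin r, j' ≠ j →
      (∑ i ∈ Finset.univ.filter (fun i => α i ∈ F j'.succ), α i) ∈ U := by
    intro j' hne
    apply Submodule.sum_mem
    intro i hi
    have hFi : α i ∈ F j'.succ := (Finset.mem_filter.1 hi).2
    have hle : F j'.succ ≤ U := by
      apply hmono
      rw [Fin.le_def]
      have h1 : (j' : ℕ) < r := j'.2
      have h2 : (j' : ℕ) ≠ (j : ℕ) := fun h => hne (Fin.ext h)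
      simp only [Fin.val_succ, hjcs]
      omega
    exact hle hFi
  have hpU : p ∈ U := by
    apply Submodule.sum_mem
    intro j' hj'
    exact Submodule.smul_mem _ _ (hterm j' (Finset.ne_of_mem_erase hj'))
  -- rule out c j = 0 and c j < 0
  rcases lt_trichotomy (c j) 0 with hneg | hzero | hposi
  · exfalso
    -- Part 1: p is a nonnegative combination of α's lying in U, hence p ∈ SAset α
    set tU : Finset (Fin n) := Finset.univ.filter (fun i => α i ∈ U) with htU
    have hηsub : ∀ j' : Fin r, j' ≠ j →
        Finset.univ.filter (fun i => α i ∈ F j'.succ) ⊆ tU := by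
      intro j' hne i hi
      rw [htU, Finset.mem_filter]
      refine ⟨Finset.mem_univ _, ?_⟩
      have := hterm j' hne
      rw [Finset.mem_filter] at hi
      have hle : F j'.succ ≤ U := by
        apply hmono
        rw [Fin.le_def]
        have h1 : (j' : ℕ) < r := j'.2
        have h2 : (j' : ℕ) ≠ (j : ℕ) := fun h => hne (Fin.ext h)
        simp only [Fin.val_succ, hjcs]
        omega
      exact hle hi.2
    set ccp : Fin n → ℝ := fun i => ∑ j' ∈ Finset.univ.erase j,
      (if i ∈ Finset.univ.filter (fun i' => α i' ∈ F j'.succ) then c j' else 0) with hccp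
    have hccpnn : ∀ i, 0 ≤ ccp i := by
      intro i
      apply Finset.sum_nonneg
      intro j' hj'
      have hne := Finset.ne_of_mem_erase hj'
      by_cases h : i ∈ Finset.univ.filter (fun i' => α i' ∈ F j'.succ)
      · rw [if_pos h]
        apply hc
        have h1 : (j' : ℕ) < r := j'.2
        have h2 : (j' : ℕ) ≠ (j : ℕ) := fun h => hne (Fin.ext h)
        omega
      · rw [if_neg h]
    have hprep : p = ∑ i ∈ tU, ccp i • α i := by
      rw [hp]
      have step1 : ∀ j' ∈ Finset.univ.erase j,
          c j' • (∑ i ∈ Finset.univ.filter (fun i' => α i' ∈ F j'.succ), α i)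
          = ∑ i ∈ tU, (if i ∈ Finset.univ.filter (fun i' => α i' ∈ F j'.succ)
              then c j' else 0) • α i := by
        intro j' hj'
        rw [Finset.smul_sum]
        rw [show ∀ s : Finset (Fin n), ∑ i ∈ s,
            (if i ∈ Finset.univ.filter (fun i' => α i' ∈ F j'.succ) then c j' else 0) • α i
            = ∑ i ∈ s, (if i ∈ Finset.univ.filter (fun i' => α i' ∈ F j'.succ)
              then c j' • α i else 0) from fun s => Finset.sum_congr rfl
              (fun i _ => by rw [ite_smul, zero_smul])]
        rw [Finset.sum_ite_mem]
        rw [Finset.inter_eq_right.2 (hηsub j' (Finset.ne_of_mem_erase hj'))]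
      rw [Finset.sum_congr rfl step1, Finset.sum_comm]
      apply Finset.sum_congr rfl
      intro i _
      have hcv : ccp i = ∑ j' ∈ Finset.univ.erase j,
          (if i ∈ Finset.univ.filter (fun i' => α i' ∈ F j'.succ) then c j' else 0) := by
        rw [hccp]
      rw [hcv, Finset.sum_smul]
    obtain ⟨τ₀, hτ₀sub, hliτ₀, e₀, he₀pos, he₀sum⟩ :=
      posCara α tU ccp (fun i _ => hccpnn i)
    have hτ₀span : Submodule.span ℝ (α '' ↑τ₀) ≠ ⊤ := by
      have hsubU : Submodule.span ℝ (α '' ↑τ₀) ≤ U := by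
        apply Submodule.span_le.2
        rintro x ⟨i, hi, rfl⟩
        have := hτ₀sub hi
        rw [htU, Finset.mem_filter] at this
        exact this.2
      intro h
      exact hUne (le_antisymm le_top (h ▸ hsubU))
    have hpK : p ∈ Kset α τ₀ := by
      refine ⟨fun i => if i ∈ τ₀ then e₀ i else 0, ?_, ?_⟩
      · intro i
        show 0 ≤ if i ∈ τ₀ then e₀ i else 0
        by_cases h : i ∈ τ₀
        · rw [if_pos h]; exact le_of_lt (he₀pos i h)
        · rw [if_neg h]
      · show p = ∑ i ∈ τ₀, (if i ∈ τ₀ then e₀ i else 0) • α i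
        rw [hprep, ← he₀sum]
        apply Finset.sum_congr rfl
        intro i hi
        rw [if_pos hi]
    have hpSA : p ∈ SAset α := mem_SAset_of α hliτ₀ hτ₀span hpK
    -- Part 2: the ray ξ + t•κ, first touch of SAset
    have hSAclosed : IsClosed (SAset α) := SAset_closed hr hrpos α hspan
    have hraycont : Continuous (fun t : ℝ => ξ + t • κ) := by
      apply Continuous.add continuous_const
      exact Continuous.smul continuous_id continuous_const
    set Tset : Set ℝ := {t : ℝ | 0 ≤ t ∧ ξ + t • κ ∈ SAset α} with hTset
    have hξSA : ξ ∉ SAset α := by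
      intro hmem
      obtain ⟨τ', hτ'⟩ := Set.mem_iUnion.1 hmem
      obtain ⟨hPτ', hKτ'⟩ := Set.mem_iUnion.1 hτ'
      obtain ⟨hliτ', hspτ'⟩ := hPτ'
      have hsub : (α '' ↑τ' : Set W) ⊆
          {x | ∃ η : Finset (Fin n), x = ∑ i ∈ η, α i} := by
        rintro x ⟨i, _, rfl⟩
        exact ⟨{i}, by simp⟩
      exact hreg _ hsub hspτ' (Kset_sub_span α τ' hKτ')
    have hTclosed : IsClosed Tset := by
      have : Tset = {t : ℝ | 0 ≤ t} ∩ (fun t : ℝ => ξ + t • κ) ⁻¹' (SAset α) := rfl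
      rw [this]
      exact IsClosed.inter (isClosed_le continuous_const continuous_id)
        (hSAclosed.preimage hraycont)
    have hT0 : -(c j) ∈ Tset := by
      constructor
      · linarith
      · have : ξ + (-(c j)) • κ = p := by
          rw [hsplit]
          module
        rw [this]
        exact hpSA
    set ts : ℝ := sInf Tset with hts
    have htsT : ts ∈ Tset := IsClosed.csInf_mem hTclosed ⟨_, hT0⟩ ⟨0, fun t ht => ht.1⟩
    have htspos : 0 < ts := by
      rcases lt_or_eq_of_le htsT.1 with h | h
      · exact h
      · exfalso
        apply hξSA
        have := htsT.2
        rw [← h, zero_smul, add_zero] at this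
        exact this
    set w : W := ξ + ts • κ with hw
    have hwSA : w ∈ SAset α := htsT.2
    -- chamber bookkeeping
    obtain ⟨x₀, hx₀O, hCdef⟩ := hchamber
    have hCO : C ⊆ coneA \ sing := by
      rw [hCdef]
      exact connectedComponentIn_subset _ _
    have hCeq : C = connectedComponentIn (coneA \ sing) ξ := by
      rw [hCdef]
      exact connectedComponentIn_eq (by rw [← hCdef]; exact hξC)
    obtain ⟨aξ, haξ0, haξ⟩ : ∃ a : Fin n → ℝ, (∀ i, 0 ≤ a i) ∧ ξ = ∑ i, a i • α i := by
      have := (hCO hξC).1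
      rw [hconeA] at this
      exact this
    have hconeRay : ∀ t : ℝ, 0 ≤ t → ξ + t • κ ∈ coneA := by
      intro t ht
      rw [hconeA]
      refine ⟨fun i => aξ i + t, ?_, ?_⟩
      · intro i
        show 0 ≤ aξ i + t
        have := haξ0 i
        linarith
      rw [haξ, hκ, Finset.smul_sum, ← Finset.sum_add_distrib]
      apply Finset.sum_congr rfl
      intro i _
      rw [add_smul]
    have hsingSA : sing ⊆ SAset α := by
      rw [hsing]
      intro x hx
      obtain ⟨σ', hσ'⟩ := Set.mem_iUnion.1 hx
      obtain ⟨⟨hcard', hli'⟩, hfr⟩ := Set.mem_iUnion.1 hσ'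
      exact frontier_sub_SAset hr hrpos α hcard' hli' hfr
    have hpre : ∀ t : ℝ, 0 ≤ t → t < ts → ξ + t • κ ∈ C := by
      intro t ht htlt
      have hSseg : ((fun t : ℝ => ξ + t • κ) '' Set.Ico 0 ts) ⊆ coneA \ sing := by
        rintro x ⟨t', ⟨ht'0, ht'lt⟩, rfl⟩
        constructor
        · exact hconeRay t' ht'0
        · intro hxsing
          have hxSA : ξ + t' • κ ∈ SAset α := hsingSA hxsing
          have : ts ≤ t' := csInf_le ⟨0, fun u hu => hu.1⟩ ⟨ht'0, hxSA⟩
          linarith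
      have hpreconn : IsPreconnected ((fun t : ℝ => ξ + t • κ) '' Set.Ico 0 ts) :=
        isPreconnected_Ico.image _ hraycont.continuousOn
      have hξmem : ξ ∈ (fun t : ℝ => ξ + t • κ) '' Set.Ico 0 ts :=
        ⟨0, ⟨le_refl 0, htspos⟩, by simp⟩
      have := hpreconn.subset_connectedComponentIn hξmem hSseg
      rw [← hCeq] at this
      exact this ⟨t, ⟨ht, htlt⟩, rfl⟩
    -- Part 3: carathéodory data at w
    obtain ⟨τ₁, hτ₁⟩ := Set.mem_iUnion.1 hwSA
    obtain ⟨⟨hliτ₁, hspτ₁⟩, hKτ₁⟩ := Set.mem_iUnion.1 hτ₁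
    obtain ⟨cw, hcwnn, hcweq⟩ := hKτ₁
    obtain ⟨τ, hττ₁, hliτ, e, hepos, hesum⟩ :=
      posCara α τ₁ cw (fun i _ => hcwnn i)
    have hwsum : ∑ i ∈ τ, e i • α i = w := by rw [hesum, ← hcweq]
    have hVproper : Submodule.span ℝ (α '' ↑τ) ≠ ⊤ := by
      intro h
      apply hspτ₁
      apply le_antisymm le_top
      rw [← h]
      exact Submodule.span_mono (Set.image_mono (by exact_mod_cast hττ₁))
    set Vτ : Submodule ℝ W := Submodule.span ℝ (α '' ↑τ) with hVτ
    set x₁ : W := ξ + (ts/2) • κ with hx₁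
    have hx₁C : x₁ ∈ C := hpre (ts/2) (by linarith) (by linarith)
    obtain ⟨a', ha'0, ha'⟩ : ∃ a : Fin n → ℝ, (∀ i, 0 ≤ a i) ∧ x₁ = ∑ i, a i • α i := by
      have := (hCO hx₁C).1
      rw [hconeA] at this
      exact this
    have hqx₁ : Vτ.mkQ x₁ = ∑ i, a' i • Vτ.mkQ (α i) := by
      rw [ha', map_sum]
      exact Finset.sum_congr rfl (fun i _ => by rw [map_smul])
    obtain ⟨ρ, hρu, hliρ, g, hgpos, hgsum⟩ :=
      posCara (fun i => Vτ.mkQ (α i)) Finset.univ a' (fun i _ => ha'0 i)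
    have hgsum' : ∑ i ∈ ρ, g i • Vτ.mkQ (α i) = Vτ.mkQ x₁ := by
      rw [hgsum, ← hqx₁]
    have hker : x₁ - ∑ i ∈ ρ, g i • α i ∈ Vτ := by
      rw [← Submodule.Quotient.mk_eq_zero Vτ]
      rw [show (Submodule.Quotient.mk (x₁ - ∑ i ∈ ρ, g i • α i) : W ⧸ Vτ)
        = Vτ.mkQ (x₁ - ∑ i ∈ ρ, g i • α i) from rfl]
      rw [map_sub, map_sum]
      rw [show ∑ i ∈ ρ, Vτ.mkQ (g i • α i) = ∑ i ∈ ρ, g i • Vτ.mkQ (α i) from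
        Finset.sum_congr rfl (fun i _ => by rw [map_smul])]
      rw [hgsum', sub_self]
    have hτinj : Set.InjOn α ↑τ := by
      intro i hi i' hi' hii'
      have := hliτ.injective (a₁ := ⟨i, hi⟩) (a₂ := ⟨i', hi'⟩) hii'
      exact congrArg Subtype.val this
    have hker' : x₁ - ∑ i ∈ ρ, g i • α i ∈
        Submodule.span ℝ (↑(τ.image α) : Set W) := by
      rw [Finset.coe_image]
      exact hker
    obtain ⟨df, -, hdf⟩ := Submodule.mem_span_finset.1 hker'
    set d : Fin n → ℝ := fun i => df (α i) with hd
    have hdsum : ∑ i ∈ τ, d i • α i = x₁ - ∑ i ∈ ρ, g i • α i := by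
      rw [← hdf, Finset.sum_image (fun i hi i' hi' h => hτinj hi hi' h)]
    have hx₁split : x₁ = ∑ i ∈ ρ, g i • α i + ∑ i ∈ τ, d i • α i := by
      rw [hdsum]
      abel
    obtain ⟨hdisj, hliτρ⟩ := liUnionQuot α τ ρ hliτ hliρ
    obtain ⟨σ0, hτρσ0, hcard0, hliσ0⟩ := extendToBasisIndex hr α hspan (τ ∪ ρ) hliτρ
    have hτσ0 : τ ⊆ σ0 := (Finset.subset_union_left).trans hτρσ0
    have hρσ0 : ρ ⊆ σ0 := (Finset.subset_union_right).trans hτρσ0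
    have hσ0pos : 0 < σ0.card := by rw [hcard0]; exact hrpos
    obtain ⟨i₀, hi₀⟩ := Finset.card_pos.1 hσ0pos
    haveI : Nonempty ↥σ0 := ⟨⟨i₀, hi₀⟩⟩
    set B0 : Module.Basis ↥σ0 ℝ W :=
      basisOfLinearIndependentOfCardEqFinrank hliσ0
        (by rw [Fintype.card_coe, hcard0, hr]) with hB0def
    have hB0 : ∀ i : ↥σ0, B0 i = α ↑i := fun i =>
      congrFun (coe_basisOfLinearIndependentOfCardEqFinrank hliσ0 _) i
    -- choose θ
    obtain ⟨θ, hθ0, hθ1, hθτ⟩ : ∃ θ : ℝ, 0 < θ ∧ θ ≤ 1 ∧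
        ∀ i ∈ τ, 0 < (1 - θ) * e i + θ * d i := by
      by_cases hτne : τ.Nonempty
      · refine ⟨min 1 (τ.inf' hτne (fun i => e i / (e i + |d i| + 1))), ?_, min_le_left _ _, ?_⟩
        · apply lt_min one_pos
          rw [Finset.lt_inf'_iff]
          intro i hi
          apply div_pos (hepos i hi)
          have := abs_nonneg (d i)
          have := hepos i hi
          linarith
        · intro i hi
          have hD : 0 < e i + |d i| + 1 := by
            have := abs_nonneg (d i); have := hepos i hi; linarith
          have h5 : min 1 (τ.inf' hτne (fun i => e i / (e i + |d i| + 1)))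
              ≤ e i / (e i + |d i| + 1) :=
            le_trans (min_le_right _ _) (Finset.inf'_le _ hi)
          have h6 : min 1 (τ.inf' hτne (fun i => e i / (e i + |d i| + 1)))
              * (e i + |d i| + 1) ≤ e i := (le_div_iff₀ hD).1 h5
          have h7 : 0 < min 1 (τ.inf' hτne (fun i => e i / (e i + |d i| + 1))) := by
            apply lt_min one_pos
            rw [Finset.lt_inf'_iff]
            intro i' hi'
            apply div_pos (hepos i' hi')
            have := abs_nonneg (d i'); have := hepos i' hi'; linarith
          have h8 : -|d i| ≤ d i := neg_abs_le (d i)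
          nlinarith
      · rw [Finset.not_nonempty_iff_eq_empty] at hτne
        exact ⟨1, one_pos, le_refl 1, fun i hi => by rw [hτne] at hi; simp at hi⟩
    -- the point x₂ on the ray
    set t2 : ℝ := (1 - θ) * ts + θ * (ts/2) with ht2
    have ht2nn : 0 ≤ t2 := by
      rw [ht2]
      have h1 : (0:ℝ) ≤ 1 - θ := by linarith
      have h2 : (0:ℝ) ≤ ts / 2 := by
        have := htspos
        linarith
      exact add_nonneg (mul_nonneg h1 htspos.le) (mul_nonneg hθ0.le h2)
    have ht2lt : t2 < ts := by
      have h2 : 0 < θ * (ts / 2) := mul_pos hθ0 (by linarith)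
      have h3 : 0 < ts - t2 := by
        rw [show ts - t2 = θ * (ts / 2) from by rw [ht2]; ring]
        exact h2
      linarith
    have hx₂C : ξ + t2 • κ ∈ C := hpre t2 ht2nn ht2lt
    have hx₂eq : ξ + t2 • κ = (1 - θ) • w + θ • x₁ := by
      rw [hw, hx₁, ht2]
      module
    set cc2 : Fin n → ℝ := fun i => if i ∈ τ then (1 - θ) * e i + θ * d i
      else if i ∈ ρ then θ * g i else 0 with hcc2
    have hcc2nn : ∀ i, 0 ≤ cc2 i := by
      intro i
      show 0 ≤ if i ∈ τ then (1 - θ) * e i + θ * d i else if i ∈ ρ then θ * g i else 0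
      by_cases h1 : i ∈ τ
      · rw [if_pos h1]; exact le_of_lt (hθτ i h1)
      · rw [if_neg h1]
        by_cases h2 : i ∈ ρ
        · rw [if_pos h2]
          exact le_of_lt (mul_pos hθ0 (hgpos i h2))
        · rw [if_neg h2]
    have hx₂sum : ξ + t2 • κ = ∑ i ∈ τ ∪ ρ, cc2 i • α i := by
      rw [hx₂eq, ← hwsum, hx₁split]
      rw [Finset.sum_union hdisj]
      rw [Finset.smul_sum, smul_add, Finset.smul_sum, Finset.smul_sum]
      have hτpart : ∀ i ∈ τ, cc2 i • α i
          = (1 - θ) • (e i • α i) + θ • (d i • α i) := by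
        intro i hi
        show (if i ∈ τ then (1 - θ) * e i + θ * d i else if i ∈ ρ then θ * g i else 0) • α i
          = (1 - θ) • (e i • α i) + θ • (d i • α i)
        rw [if_pos hi, add_smul, smul_smul, smul_smul]
      have hρpart : ∀ i ∈ ρ, cc2 i • α i = θ • (g i • α i) := by
        intro i hi
        show (if i ∈ τ then (1 - θ) * e i + θ * d i else if i ∈ ρ then θ * g i else 0) • α i
          = θ • (g i • α i)
        rw [if_neg (Finset.disjoint_right.1 hdisj hi), if_pos hi, smul_smul]
      rw [Finset.sum_congr rfl hτpart, Finset.sum_congr rfl hρpart]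
      rw [Finset.sum_add_distrib]
      abel
    have hx₂K : ξ + t2 • κ ∈ Kset α σ0 := by
      refine ⟨cc2, hcc2nn, ?_⟩
      rw [hx₂sum]
      apply Finset.sum_subset hτρσ0
      intro i hi hni
      rw [Finset.mem_union] at hni
      push_neg at hni
      show (if i ∈ τ then (1 - θ) * e i + θ * d i else if i ∈ ρ then θ * g i else 0) • α i = 0
      rw [if_neg hni.1, if_neg hni.2, zero_smul]
    -- Part 4: dichotomy and contradiction
    have hKclosed : IsClosed (Kset α σ0) := isClosed_Kset α B0 hB0 (le_refl σ0)
    have hfrontier_sing : frontier (Kset α σ0) ⊆ sing := by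
      intro x hx
      rw [hsing]
      exact Set.mem_iUnion.2 ⟨σ0, Set.mem_iUnion.2 ⟨⟨hcard0, hliσ0⟩, hx⟩⟩
    have hCsub : C ⊆ interior (Kset α σ0) ∪ (Kset α σ0)ᶜ := by
      intro x hx
      by_cases hxK : x ∈ Kset α σ0
      · left
        by_contra hxint
        have : x ∈ frontier (Kset α σ0) := by
          rw [hKclosed.frontier_eq]
          exact ⟨hxK, hxint⟩
        exact (hCO hx).2 (hfrontier_sing this)
      · right; exact hxK
    have hCpreconn : IsPreconnected C := by
      rw [hCdef]
      exact isPreconnected_connectedComponentIn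
    rcases hCpreconn.subset_or_subset isOpen_interior (hKclosed.isOpen_compl)
        (Set.disjoint_left.2 (fun x hx hxc => hxc (interior_subset hx))) hCsub with
      hCint | hCcompl
    · -- C ⊆ interior (Kset α σ0): coordinates give a contradiction
      have hξint : ξ ∈ interior (Kset α σ0) := hCint hξC
      have hκK : κ ∈ Kset α σ0 := by
        have h1 : closure C ⊆ closure (Kset α σ0) :=
          closure_mono (hCint.trans interior_subset)
        rw [hKclosed.closure_eq] at h1
        exact h1 hκC
      obtain ⟨b, hbτ⟩ : ∃ b : ↥σ0, ↑b ∉ τ := by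
        by_contra hno
        push_neg at hno
        apply hVproper
        apply le_antisymm le_top
        have hσ0τ : σ0 ⊆ τ := fun i hi => hno ⟨i, hi⟩
        have hspanσ0 : Submodule.span ℝ (α '' ↑σ0) = ⊤ := by
          have h1 := Module.Basis.span_eq B0
          have h2 : Set.range ⇑B0 = α '' ↑σ0 := by
            rw [show ⇑B0 = fun i : ↥σ0 => α ↑i from funext hB0]
            exact rangeCoeFinset α σ0
          rw [h2] at h1
          exact h1
        rw [← hspanσ0]
        exact Submodule.span_mono (Set.image_mono (by exact_mod_cast hσ0τ))
      have hwcoord : B0.repr w b = 0 := by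
        rw [← hwsum, coordSum α B0 hB0 hτσ0 e b, if_neg hbτ]
      have hξb : 0 < B0.repr ξ b := interior_pos α B0 hB0 ξ hξint b
      have hκb : 0 ≤ B0.repr κ b := ((memKiff α B0 hB0 (le_refl σ0) κ).1 hκK b).1
      have hwb : B0.repr w b = B0.repr ξ b + ts * B0.repr κ b := by
        rw [hw, map_add, map_smul, Finsupp.add_apply, Finsupp.smul_apply, smul_eq_mul]
      rw [hwcoord] at hwb
      have hfin : 0 < B0.repr ξ b + ts * B0.repr κ b :=
        add_pos_of_pos_of_nonneg hξb (mul_nonneg htspos.le hκb)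
      rw [← hwb] at hfin
      exact lt_irrefl 0 hfin
    · exact (hCcompl hx₂C) hx₂K
  · exfalso
    apply hξU
    rw [hsplit, hzero, zero_smul, zero_add]
    exact hpU
  · exact hposi
end
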